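/- arXiv:1812.04963 — 6 statements merged into one kernel-verified Lean document; each statement's English description precedes it below -/
import Mathlib

section
/- There exists a fuzzy-valued function that is generalized Seikkala differentiable but not Seikkala differentiable; e.g., g(t) = a · exp(−t) where a is any fuzzy number with a₁ strictly increasing and a₂ strictly decreasing in α. -/
/-! Multiplying the level functions of `a` by the negative number `-e^{-t}` reverses their order:
`-a₂(α)e^{-t}` is the increasing lower end and `-a₁(α)e^{-t}` the decreasing upper end. Taking
`min`/`max` of the two derivatives restores exactly this order, so `g` is gS-differentiable; but
in the order Seikkala's definition prescribes, the lower end `-a₁(α)e^{-t}` is strictly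
decreasing, which no fuzzy number allows. -/

def IsFuzzyLevel (L U : ℝ → ℝ) : Prop :=
  MonotoneOn L (Set.Icc 0 1) ∧ AntitoneOn U (Set.Icc 0 1) ∧
    ∀ α ∈ Set.Icc (0:ℝ) 1, L α ≤ U α

open Set

namespace IsFuzzyLevel

variable {L U : ℝ → ℝ}

theorem neg_mul_const (h : IsFuzzyLevel L U) {c : ℝ} (hc : 0 < c) :
    IsFuzzyLevel (fun α => -(U α * c)) (fun α => -(L α * c)) :=
  ⟨((monotone_mul_right_of_nonneg hc.le).comp_antitoneOn h.2.1).neg,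
    ((monotone_mul_right_of_nonneg hc.le).comp_monotoneOn h.1).neg,
    fun α hα => neg_le_neg (mul_le_mul_of_nonneg_right (h.2.2 α hα) hc.le)⟩

theorem min_max_of_swap (h : IsFuzzyLevel U L) :
    IsFuzzyLevel (fun α => min (L α) (U α)) (fun α => max (L α) (U α)) := by
  have hmin : EqOn U (fun α => min (L α) (U α)) (Icc 0 1) :=
    fun α hα => (min_eq_right (h.2.2 α hα)).symm
  have hmax : EqOn L (fun α => max (L α) (U α)) (Icc 0 1) :=
    fun α hα => (max_eq_left (h.2.2 α hα)).symm
  exact ⟨h.1.congr hmin, h.2.1.congr hmax, fun _ _ => min_le_max⟩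

end IsFuzzyLevel

theorem not_isFuzzyLevel_of_strictAntiOn {L : ℝ → ℝ} (hL : StrictAntiOn L (Icc 0 1))
    (U : ℝ → ℝ) : ¬ IsFuzzyLevel L U := by
  rintro ⟨hmono, -, -⟩
  have h0 : (0:ℝ) ∈ Icc (0:ℝ) 1 := left_mem_Icc.2 zero_le_one
  have h1 : (1:ℝ) ∈ Icc (0:ℝ) 1 := right_mem_Icc.2 zero_le_one
  exact (hL h0 h1 zero_lt_one).not_ge (hmono h0 h1 zero_le_one)

theorem hasDerivAt_mul_exp_neg (c t : ℝ) :
    HasDerivAt (fun s => c * Real.exp (-s)) (-(c * Real.exp (-t))) t := by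
  simpa using ((Real.hasDerivAt_exp (-t)).comp t (hasDerivAt_neg t)).const_mul c

/-- `g(t) = a·exp(−t)`, with `a₁` strictly increasing and `a₂` strictly
decreasing, is gS-differentiable at every `t` but nowhere Seikkala
differentiable: the min/max family of the `t`-derivatives
`−a₁(α)e^{−t}, −a₂(α)e^{−t}` is a fuzzy level family, while the ordered family
`[−a₁(α)e^{−t}, −a₂(α)e^{−t}]` is not. -/
theorem gS_not_S_exp
    (a₁ a₂ : ℝ → ℝ)
    (h₁ : StrictMonoOn a₁ (Set.Icc 0 1))
    (h₂ : StrictAntiOn a₂ (Set.Icc 0 1))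
    (hle : ∀ α ∈ Set.Icc (0:ℝ) 1, a₁ α ≤ a₂ α) :
    ∀ t : ℝ,
      (∀ α ∈ Set.Icc (0:ℝ) 1,
        HasDerivAt (fun s => a₁ α * Real.exp (-s)) (-(a₁ α * Real.exp (-t))) t ∧
        HasDerivAt (fun s => a₂ α * Real.exp (-s)) (-(a₂ α * Real.exp (-t))) t) ∧
      IsFuzzyLevel
        (fun α => min (-(a₁ α * Real.exp (-t))) (-(a₂ α * Real.exp (-t))))
        (fun α => max (-(a₁ α * Real.exp (-t))) (-(a₂ α * Real.exp (-t)))) ∧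
      ¬ IsFuzzyLevel (fun α => -(a₁ α * Real.exp (-t)))
          (fun α => -(a₂ α * Real.exp (-t))) := by
  intro t
  have ha : IsFuzzyLevel a₁ a₂ := ⟨h₁.monotoneOn, h₂.antitoneOn, hle⟩
  have hlower : StrictAntiOn (fun α => -(a₁ α * Real.exp (-t))) (Icc 0 1) :=
    ((strictMono_mul_right_of_pos (Real.exp_pos (-t))).comp_strictMonoOn h₁).neg
  exact ⟨fun α _ => ⟨hasDerivAt_mul_exp_neg _ t, hasDerivAt_mul_exp_neg _ t⟩,
    (ha.neg_mul_const (Real.exp_pos (-t))).min_max_of_swap,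
    not_isFuzzyLevel_of_strictAntiOn hlower _⟩
end

section
/- If a is a fuzzy number with a₁ strictly increasing and a₂ strictly decreasing in α (and differentiable), then h(t) = a·sin(t) is not Seikkala differentiable at any t ∈ (π/2, π], because [a₁(α)cos t, a₂(α)cos t] fails to be the level sets of a fuzzy number when cos t < 0. -/
/-- If `a₁` is strictly increasing and `a₂` strictly decreasing (and
differentiable), then `h(t) = a·sin t` is not Seikkala differentiable at any
`t ∈ (π/2, π]`: the family `[a₁(α)cos t, a₂(α)cos t]` fails to be the level
sets of a fuzzy number since `cos t < 0`. -/
theorem sin_not_seikkala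
    (a₁ a₂ : ℝ → ℝ)
    (h₁ : StrictMonoOn a₁ (Set.Icc 0 1))
    (h₂ : StrictAntiOn a₂ (Set.Icc 0 1))
    (hd₁ : ∀ α ∈ Set.Icc (0:ℝ) 1, DifferentiableAt ℝ a₁ α)
    (hd₂ : ∀ α ∈ Set.Icc (0:ℝ) 1, DifferentiableAt ℝ a₂ α)
    (hle : ∀ α ∈ Set.Icc (0:ℝ) 1, a₁ α ≤ a₂ α) :
    ∀ t ∈ Set.Ioc (Real.pi / 2) Real.pi,
      Real.cos t < 0 ∧
      ¬ IsFuzzyLevel (fun α => a₁ α * Real.cos t)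
          (fun α => a₂ α * Real.cos t) := by
  intro t ht
  have hc : Real.cos t < 0 := by
    apply Real.cos_neg_of_pi_div_two_lt_of_lt ht.1
    linarith [ht.2, Real.pi_pos]
  refine ⟨hc, ?_⟩
  rintro ⟨hmon, -, -⟩
  have h0 : (0:ℝ) ∈ Set.Icc (0:ℝ) 1 := by constructor <;> norm_num
  have h1 : (1:ℝ) ∈ Set.Icc (0:ℝ) 1 := by constructor <;> norm_num
  have hlt : a₁ 0 < a₁ 1 := h₁ h0 h1 (by norm_num)
  have := hmon h0 h1 (by norm_num)
  simp only at this
  nlinarith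
end

section
/- If f and g are fuzzy-valued functions on I that are gS-differentiable at t, and at t either f₁' ≤ f₂' and g₁' ≤ g₂' for all α, or f₂' ≤ f₁' and g₂' ≤ g₁' for all α, then f + g is gS-differentiable at t with gS-derivative level sets equal to the sum of the gS-derivative level sets of f and g. -/
/-- If `f` and `g` are gS-differentiable at `t` and the level derivatives are
consistently ordered (both `f₁' ≤ f₂', g₁' ≤ g₂'`, or both reversed), then
`f + g` is gS-differentiable at `t` and its gS-derivative level sets are the
(levelwise) sum of those of `f` and `g`. -/
theorem gS_add
    (f₁ f₂ g₁ g₂ : ℝ → ℝ → ℝ) (f₁' f₂' g₁' g₂' : ℝ → ℝ) (t : ℝ)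
    (hf : ∀ α ∈ Set.Icc (0:ℝ) 1,
      HasDerivAt (fun s => f₁ s α) (f₁' α) t ∧
      HasDerivAt (fun s => f₂ s α) (f₂' α) t)
    (hg : ∀ α ∈ Set.Icc (0:ℝ) 1,
      HasDerivAt (fun s => g₁ s α) (g₁' α) t ∧
      HasDerivAt (fun s => g₂ s α) (g₂' α) t)
    (hfg : IsFuzzyLevel (fun α => min (f₁' α) (f₂' α)) (fun α => max (f₁' α) (f₂' α)))
    (hgg : IsFuzzyLevel (fun α => min (g₁' α) (g₂' α)) (fun α => max (g₁' α) (g₂' α)))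
    (hord : (∀ α ∈ Set.Icc (0:ℝ) 1, f₁' α ≤ f₂' α ∧ g₁' α ≤ g₂' α) ∨
            (∀ α ∈ Set.Icc (0:ℝ) 1, f₂' α ≤ f₁' α ∧ g₂' α ≤ g₁' α)) :
    (∀ α ∈ Set.Icc (0:ℝ) 1,
      HasDerivAt (fun s => f₁ s α + g₁ s α) (f₁' α + g₁' α) t ∧
      HasDerivAt (fun s => f₂ s α + g₂ s α) (f₂' α + g₂' α) t) ∧
    IsFuzzyLevel (fun α => min (f₁' α + g₁' α) (f₂' α + g₂' α))
      (fun α => max (f₁' α + g₁' α) (f₂' α + g₂' α)) ∧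
    (∀ α ∈ Set.Icc (0:ℝ) 1,
      min (f₁' α + g₁' α) (f₂' α + g₂' α)
        = min (f₁' α) (f₂' α) + min (g₁' α) (g₂' α) ∧
      max (f₁' α + g₁' α) (f₂' α + g₂' α)
        = max (f₁' α) (f₂' α) + max (g₁' α) (g₂' α)) := by
  have key : ∀ α ∈ Set.Icc (0:ℝ) 1,
      min (f₁' α + g₁' α) (f₂' α + g₂' α)
        = min (f₁' α) (f₂' α) + min (g₁' α) (g₂' α) ∧
      max (f₁' α + g₁' α) (f₂' α + g₂' α)
        = max (f₁' α) (f₂' α) + max (g₁' α) (g₂' α) := by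
    intro α hα
    rcases hord with h | h
    · obtain ⟨h1, h2⟩ := h α hα
      rw [min_eq_left h1, min_eq_left h2, min_eq_left (add_le_add h1 h2),
        max_eq_right h1, max_eq_right h2, max_eq_right (add_le_add h1 h2)]
      exact ⟨rfl, rfl⟩
    · obtain ⟨h1, h2⟩ := h α hα
      rw [min_eq_right h1, min_eq_right h2, min_eq_right (add_le_add h1 h2),
        max_eq_left h1, max_eq_left h2, max_eq_left (add_le_add h1 h2)]
      exact ⟨rfl, rfl⟩
  refine ⟨fun α hα => ⟨(hf α hα).1.add (hg α hα).1, (hf α hα).2.add (hg α hα).2⟩,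
    ⟨?_, ?_, ?_⟩, key⟩
  · intro a ha b hb hab
    dsimp only
    rw [(key a ha).1, (key b hb).1]
    exact add_le_add (hfg.1 ha hb hab) (hgg.1 ha hb hab)
  · intro a ha b hb hab
    dsimp only
    rw [(key a ha).2, (key b hb).2]
    exact add_le_add (hfg.2.1 ha hb hab) (hgg.2.1 ha hb hab)
  · intro α hα
    dsimp only
    rw [(key α hα).1, (key α hα).2]
    exact add_le_add (hfg.2.2 α hα) (hgg.2.2 α hα)
end

section
/- If a fuzzy-valued function f is gS-differentiable at t and λ ∈ ℝ, then λ·f is gS-differentiable at t, with the α-level sets of (λf)'(t) equal to λ times the α-level sets of f'(t) (interval-scaled, reversing endpoints when λ < 0). -/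
section MulMinMax

variable {R : Type*} [Ring R] [LinearOrder R] [IsOrderedRing R]

lemma min_mul_left_eq_ite (c a b : R) :
    min (c * a) (c * b) = if 0 ≤ c then c * min a b else c * max a b := by
  split_ifs with hc
  · exact (mul_min_of_nonneg a b hc).symm
  · exact (smul_max_of_nonpos (le_of_not_ge hc) a b).symm

lemma max_mul_left_eq_ite (c a b : R) :
    max (c * a) (c * b) = if 0 ≤ c then c * max a b else c * min a b := by
  split_ifs with hc
  · exact (mul_max_of_nonneg a b hc).symm
  · exact (smul_min_of_nonpos (le_of_not_ge hc) a b).symm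

end MulMinMax

namespace IsFuzzyLevel

variable {L U : ℝ → ℝ} {c : ℝ}

lemma const_mul_of_nonneg (h : IsFuzzyLevel L U) (hc : 0 ≤ c) :
    IsFuzzyLevel (fun α => c * L α) (fun α => c * U α) :=
  ⟨(monotone_mul_left_of_nonneg hc).comp_monotoneOn h.1,
    (monotone_mul_left_of_nonneg hc).comp_antitoneOn h.2.1,
    fun α hα => mul_le_mul_of_nonneg_left (h.2.2 α hα) hc⟩

lemma const_mul_of_nonpos (h : IsFuzzyLevel L U) (hc : c ≤ 0) :
    IsFuzzyLevel (fun α => c * U α) (fun α => c * L α) :=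
  ⟨(antitone_mul_left hc).comp_antitoneOn h.2.1,
    (antitone_mul_left hc).comp_monotoneOn h.1,
    fun α hα => mul_le_mul_of_nonpos_left (h.2.2 α hα) hc⟩

end IsFuzzyLevel

/-- If `f` is gS-differentiable at `t` and `λ ∈ ℝ`, then `λ·f` is
gS-differentiable at `t`, its gS-derivative level sets being `λ` times those of
`f'(t)` (endpoints reversed when `λ < 0`). -/
theorem gS_smul
    (f₁ f₂ : ℝ → ℝ → ℝ) (f₁' f₂' : ℝ → ℝ) (t lam : ℝ)
    (hf : ∀ α ∈ Set.Icc (0:ℝ) 1,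
      HasDerivAt (fun s => f₁ s α) (f₁' α) t ∧
      HasDerivAt (fun s => f₂ s α) (f₂' α) t)
    (hfuzzy : IsFuzzyLevel (fun α => min (f₁' α) (f₂' α))
      (fun α => max (f₁' α) (f₂' α))) :
    (∀ α ∈ Set.Icc (0:ℝ) 1,
      HasDerivAt (fun s => lam * f₁ s α) (lam * f₁' α) t ∧
      HasDerivAt (fun s => lam * f₂ s α) (lam * f₂' α) t) ∧
    IsFuzzyLevel (fun α => min (lam * f₁' α) (lam * f₂' α))
      (fun α => max (lam * f₁' α) (lam * f₂' α)) ∧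
    (∀ α ∈ Set.Icc (0:ℝ) 1,
      min (lam * f₁' α) (lam * f₂' α)
        = (if 0 ≤ lam then lam * min (f₁' α) (f₂' α)
           else lam * max (f₁' α) (f₂' α)) ∧
      max (lam * f₁' α) (lam * f₂' α)
        = (if 0 ≤ lam then lam * max (f₁' α) (f₂' α)
           else lam * min (f₁' α) (f₂' α))) := by
  refine ⟨fun α hα => ⟨(hf α hα).1.const_mul lam, (hf α hα).2.const_mul lam⟩, ?_,
    fun α _ => ⟨min_mul_left_eq_ite _ _ _, max_mul_left_eq_ite _ _ _⟩⟩
  simp only [min_mul_left_eq_ite lam, max_mul_left_eq_ite lam]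
  by_cases hlam : 0 ≤ lam
  · simpa only [hlam, if_true] using hfuzzy.const_mul_of_nonneg hlam
  · simpa only [hlam, if_false] using hfuzzy.const_mul_of_nonpos (le_of_not_ge hlam)
end

section
/- Let a be a fuzzy number and φ : I → ℝ a differentiable real function with φ(t) ≥ 0 on I. Then the fuzzy-valued function f(t) = a·φ(t) (levelwise: [a₁(α)φ(t), a₂(α)φ(t)]) has level functions differentiable in t, and for each fixed t the interval [min{a₁(α)φ'(t), a₂(α)φ'(t)}, max{a₁(α)φ'(t), a₂(α)φ'(t)}] equals the level sets of the fuzzy number φ'(t)·a; hence f is gS-differentiable with f'(t) = φ'(t)·a. -/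
/-- For a fuzzy number `a` and differentiable `φ ≥ 0` on `I`, the function
`f(t) = a·φ(t)` has level functions differentiable in `t`, and the min/max
interval of the level derivatives equals the level sets of `φ'(t)·a`; hence
`f` is gS-differentiable with `f'(t) = φ'(t)·a`. -/
theorem gS_scalar_function
    (I : Set ℝ) (a₁ a₂ : ℝ → ℝ) (φ φ' : ℝ → ℝ)
    (ha : IsFuzzyLevel a₁ a₂)
    (hφ : ∀ t ∈ I, HasDerivAt φ (φ' t) t)
    (hpos : ∀ t ∈ I, 0 ≤ φ t) :
    ∀ t ∈ I,
      (∀ α ∈ Set.Icc (0:ℝ) 1,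
        HasDerivAt (fun s => a₁ α * φ s) (a₁ α * φ' t) t ∧
        HasDerivAt (fun s => a₂ α * φ s) (a₂ α * φ' t) t) ∧
      (∀ α ∈ Set.Icc (0:ℝ) 1,
        min (a₁ α * φ' t) (a₂ α * φ' t)
          = (if 0 ≤ φ' t then φ' t * a₁ α else φ' t * a₂ α) ∧
        max (a₁ α * φ' t) (a₂ α * φ' t)
          = (if 0 ≤ φ' t then φ' t * a₂ α else φ' t * a₁ α)) ∧
      IsFuzzyLevel (fun α => min (a₁ α * φ' t) (a₂ α * φ' t))
        (fun α => max (a₁ α * φ' t) (a₂ α * φ' t)) := by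
  obtain ⟨hmono, hanti, hle⟩ := ha
  intro t ht
  refine ⟨fun α _ => ⟨(hφ t ht).const_mul _, (hφ t ht).const_mul _⟩, ?_, ?_, ?_, ?_⟩
  · intro α hα
    rcases le_or_gt 0 (φ' t) with h | h
    · constructor
      · rw [if_pos h, min_eq_left (by nlinarith [hle α hα]), mul_comm]
      · rw [if_pos h, max_eq_right (by nlinarith [hle α hα]), mul_comm]
    · constructor
      · rw [if_neg (not_le.2 h), min_eq_right (by nlinarith [hle α hα]), mul_comm]
      · rw [if_neg (not_le.2 h), max_eq_left (by nlinarith [hle α hα]), mul_comm]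
  · intro x hx y hy hxy
    simp only
    rcases le_or_gt 0 (φ' t) with h | h
    · rw [min_eq_left (by nlinarith [hle x hx]), min_eq_left (by nlinarith [hle y hy])]
      exact mul_le_mul_of_nonneg_right (hmono hx hy hxy) h
    · rw [min_eq_right (by nlinarith [hle x hx]), min_eq_right (by nlinarith [hle y hy])]
      nlinarith [hanti hx hy hxy]
  · intro x hx y hy hxy
    simp only
    rcases le_or_gt 0 (φ' t) with h | h
    · rw [max_eq_right (mul_le_mul_of_nonneg_right (hle x hx) h),
        max_eq_right (mul_le_mul_of_nonneg_right (hle y hy) h)]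
      exact mul_le_mul_of_nonneg_right (hanti hx hy hxy) h
    · rw [max_eq_left (mul_le_mul_of_nonpos_right (hle x hx) h.le),
        max_eq_left (mul_le_mul_of_nonpos_right (hle y hy) h.le)]
      exact mul_le_mul_of_nonpos_right (hmono hx hy hxy) h.le
  · intro α _
    exact min_le_max
end

section
/- Let a be a fuzzy number with a₁ strictly increasing and a₂ strictly decreasing in α, and φ : I → ℝ differentiable with φ ≥ 0. Then f(t) = a·φ(t) is Seikkala differentiable at t if and only if φ'(t) ≥ 0. -/
/-- For a fuzzy number `a` with `a₁` strictly increasing and `a₂` strictly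
decreasing, and `φ ≥ 0` differentiable on `I`, the function `f(t) = a·φ(t)` is
Seikkala differentiable at `t ∈ I` iff `φ'(t) ≥ 0`. -/
theorem seikkala_iff_nonneg_deriv
    (I : Set ℝ) (a₁ a₂ : ℝ → ℝ) (φ φ' : ℝ → ℝ)
    (h₁ : StrictMonoOn a₁ (Set.Icc 0 1))
    (h₂ : StrictAntiOn a₂ (Set.Icc 0 1))
    (hle : ∀ α ∈ Set.Icc (0:ℝ) 1, a₁ α ≤ a₂ α)
    (hφ : ∀ t ∈ I, HasDerivAt φ (φ' t) t)
    (hpos : ∀ t ∈ I, 0 ≤ φ t) :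
    ∀ t ∈ I,
      (IsFuzzyLevel (fun α => a₁ α * φ' t) (fun α => a₂ α * φ' t) ↔ 0 ≤ φ' t) := by
  intro t _
  constructor
  · rintro ⟨hL, -, -⟩
    by_contra hneg
    push_neg at hneg
    have h0 : (0:ℝ) ∈ Set.Icc (0:ℝ) 1 := by norm_num
    have h1 : (1:ℝ) ∈ Set.Icc (0:ℝ) 1 := by norm_num
    have h := hL h0 h1 (by norm_num)
    simp only at h
    have ha : a₁ 0 < a₁ 1 := h₁ h0 h1 (by norm_num)
    nlinarith
  · intro hd
    refine ⟨fun x hx y hy hxy => mul_le_mul_of_nonneg_right (h₁.monotoneOn hx hy hxy) hd,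
      fun x hx y hy hxy => mul_le_mul_of_nonneg_right (h₂.antitoneOn hx hy hxy) hd,
      fun α hα => mul_le_mul_of_nonneg_right (hle α hα) hd⟩
end
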